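/- Let n ≥ 1 and 1 < p < ∞. There exist constants 0 < c < C, depending only on n and p, such that for every 0 < δ < 1, the weight w(x) = |x|^{(n−δ)(p−1)} on ℝ^n satisfies c δ^{1−p} ≤ [w]_{A_p} ≤ C δ^{1−p}; in particular w ∈ A_p. -/

import Mathlib

open MeasureTheory ENNReal

noncomputable section

/-- Axis-parallel cube in `ℝⁿ` (with the Euclidean norm) with lower corner `a` and side
length `h`. -/
def CubeE (n : ℕ) (a : Fin n → ℝ) (h : ℝ) : Set (EuclideanSpace ℝ (Fin n)) :=
  {x | ∀ i, a i ≤ x i ∧ x i ≤ a i + h}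

/-- `|Q|⁻¹ ∫_Q f`, as an extended nonnegative real. -/
def setAvgE (n : ℕ) (Q : Set (EuclideanSpace ℝ (Fin n)))
    (f : EuclideanSpace ℝ (Fin n) → ℝ) : ℝ≥0∞ :=
  (volume Q)⁻¹ * ∫⁻ x in Q, ENNReal.ofReal (f x)

/-- The `A_p` constant `[w]_{A_p} = sup_Q (|Q|⁻¹∫_Q w)(|Q|⁻¹∫_Q w^{-1/(p-1)})^{p-1}`, the
supremum being over all axis-parallel cubes. -/
def ApConstE (n : ℕ) (p : ℝ) (w : EuclideanSpace ℝ (Fin n) → ℝ) : ℝ≥0∞ :=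
  ⨆ (a : Fin n → ℝ) (h : ℝ) (_ : 0 < h),
    setAvgE n (CubeE n a h) w *
      (setAvgE n (CubeE n a h) (fun x => w x ^ (-(p - 1)⁻¹))) ^ (p - 1)

/-! The dual weight is `σ = w^{-1/(p-1)} = |x|^{δ-n}`, and integration in polar coordinates gives
`∫_{B(0,ρ)} |x|^s dx = n/(s+n) |B₁| ρ^{s+n}` for `s > -n`. For `s = δ - n` the factor `n/δ` is the
source of `δ^{1-p}`: on any cube comparable to a ball about the origin (containing one, or inside
one of comparable volume) the radius cancels from the `A_p` product, which is then
`δ^{1-p}` times a constant depending only on `n` and `p`. Cubes far from the origin relative to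
their side are harmless, since `|x|` varies on them by a factor of at most `3`.
The lower bound is attained on the unit cube centred at the origin. -/

open Set Metric

section Radial

variable {E : Type*} [NormedAddCommGroup E] [NormedSpace ℝ E] [FiniteDimensional ℝ E]
  [MeasurableSpace E] [BorelSpace E] [Nontrivial E] (μ : Measure E) [μ.IsAddHaarMeasure]

local notation "d" => Module.finrank ℝ E

omit [MeasurableSpace E] [BorelSpace E] in
lemma pow_finrank_sub_one_mul_rpow {s y : ℝ} (hy : 0 < y) :
    y ^ (d - 1) * y ^ s = y ^ (s + d - 1) := by
  rw [← Real.rpow_natCast, ← Real.rpow_add hy, Nat.cast_pred Module.finrank_pos]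
  ring_nf

lemma integrableOn_ball_norm_rpow {s : ℝ} (hs : -(d : ℝ) < s) (R : ℝ) :
    IntegrableOn (fun x : E => ‖x‖ ^ s) (ball 0 R) μ := by
  rw [integrableOn_fun_norm_addHaar μ (f := fun y => y ^ s)]
  refine IntegrableOn.congr_fun ?_ (fun y hy => (pow_finrank_sub_one_mul_rpow hy.1).symm)
    measurableSet_Ioo
  rcases le_or_gt R 0 with hR | hR
  · simp [Ioo_eq_empty_of_le hR]
  · exact (intervalIntegral.integrableOn_Ioo_rpow_iff hR).2 (by linarith)

theorem setIntegral_ball_norm_rpow {s : ℝ} (hs : -(d : ℝ) < s) {R : ℝ} (hR : 0 ≤ R) :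
    ∫ x in ball 0 R, ‖x‖ ^ s ∂μ = d / (s + d) * R ^ (s + d) * μ.real (ball 0 1) := by
  have hradial : ∫ y in Ioi (0 : ℝ), y ^ (d - 1) • (Iio R).indicator (fun y => y ^ s) y
      = R ^ (s + d) / (s + d) := by
    simp only [smul_eq_mul, ← indicator_mul_right (Iio R) (fun y : ℝ => y ^ (d - 1))]
    rw [setIntegral_indicator measurableSet_Iio, Ioi_inter_Iio,
      setIntegral_congr_fun measurableSet_Ioo (fun y hy => pow_finrank_sub_one_mul_rpow hy.1),
      ← integral_Ioc_eq_integral_Ioo, ← intervalIntegral.integral_of_le hR,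
      integral_rpow (Or.inl (by linarith)), sub_add_cancel, Real.zero_rpow (by linarith),
      sub_zero]
  have hball : ball (0 : E) R = (‖·‖) ⁻¹' Iio R := by ext; simp
  rw [← integral_indicator measurableSet_ball, hball]
  change ∫ x, (Iio R).indicator (fun y => y ^ s) ‖x‖ ∂μ = _
  rw [integral_fun_norm_addHaar μ, hradial]
  simp only [nsmul_eq_mul, smul_eq_mul]
  ring

theorem setLIntegral_ball_norm_rpow {s : ℝ} (hs : -(d : ℝ) < s) {R : ℝ} (hR : 0 ≤ R) :
    ∫⁻ x in ball 0 R, ENNReal.ofReal (‖x‖ ^ s) ∂μ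
      = ENNReal.ofReal (d / (s + d) * R ^ (s + d) * μ.real (ball 0 1)) := by
  rw [← setIntegral_ball_norm_rpow μ hs hR, ofReal_integral_eq_lintegral_ofReal
    (integrableOn_ball_norm_rpow μ hs R) (ae_of_all _ fun x => by positivity)]

end Radial

def apProduct (n : ℕ) (p : ℝ) (w : EuclideanSpace ℝ (Fin n) → ℝ)
    (Q : Set (EuclideanSpace ℝ (Fin n))) : ℝ≥0∞ :=
  setAvgE n Q w * (setAvgE n Q (fun x => w x ^ (-(p - 1)⁻¹))) ^ (p - 1)

lemma apConstE_eq_iSup_apProduct (n : ℕ) (p : ℝ) (w : EuclideanSpace ℝ (Fin n) → ℝ) :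
    ApConstE n p w = ⨆ (a : Fin n → ℝ) (h : ℝ) (_ : 0 < h), apProduct n p w (CubeE n a h) :=
  rfl

section Averages

variable {n : ℕ} {Q : Set (EuclideanSpace ℝ (Fin n))} {f : EuclideanSpace ℝ (Fin n) → ℝ}

lemma setAvgE_le_ofReal_div {a b : ℝ} (ha : 0 < a) (hvol : ENNReal.ofReal a ≤ volume Q)
    (hint : ∫⁻ x in Q, ENNReal.ofReal (f x) ≤ ENNReal.ofReal b) :
    setAvgE n Q f ≤ ENNReal.ofReal (b / a) := by
  rw [setAvgE, ENNReal.ofReal_div_of_pos ha, div_eq_mul_inv, mul_comm]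
  gcongr

lemma ofReal_div_le_setAvgE {a b : ℝ} (ha : 0 < a) (hvol : volume Q ≤ ENNReal.ofReal a)
    (hint : ENNReal.ofReal b ≤ ∫⁻ x in Q, ENNReal.ofReal (f x)) :
    ENNReal.ofReal (b / a) ≤ setAvgE n Q f := by
  rw [setAvgE, ENNReal.ofReal_div_of_pos ha, div_eq_mul_inv, mul_comm]
  gcongr

lemma setAvgE_le_of_forall_le {c : ℝ} (hQm : MeasurableSet Q) (hQ0 : volume Q ≠ 0)
    (hQt : volume Q ≠ ⊤) (h : ∀ x ∈ Q, f x ≤ c) : setAvgE n Q f ≤ ENNReal.ofReal c := by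
  calc setAvgE n Q f ≤ (volume Q)⁻¹ * ∫⁻ _ in Q, ENNReal.ofReal c := by
        rw [setAvgE]
        gcongr 1
        exact setLIntegral_mono' hQm fun x hx => ENNReal.ofReal_le_ofReal (h x hx)
    _ = ENNReal.ofReal c := by
        rw [setLIntegral_const, mul_comm, mul_assoc, ENNReal.mul_inv_cancel hQ0 hQt, mul_one]

lemma apProduct_le_of_forall_mem {p m M : ℝ} (hp : 1 < p) (hm : 0 < m) (hQm : MeasurableSet Q)
    (hQ0 : volume Q ≠ 0) (hQt : volume Q ≠ ⊤) (h : ∀ x ∈ Q, m ≤ f x ∧ f x ≤ M) :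
    apProduct n p f Q ≤ ENNReal.ofReal (M / m) := by
  have hp1 : 0 < p - 1 := by linarith
  have hdual : ∀ x ∈ Q, f x ^ (-(p - 1)⁻¹) ≤ m ^ (-(p - 1)⁻¹) := fun x hx =>
    Real.rpow_le_rpow_of_nonpos hm (h x hx).1 (by simp [hp1.le])
  have hpow : (m ^ (-(p - 1)⁻¹)) ^ (p - 1) = m⁻¹ := by
    rw [← Real.rpow_mul hm.le, neg_mul, inv_mul_cancel₀ hp1.ne', Real.rpow_neg_one]
  calc apProduct n p f Q
      ≤ ENNReal.ofReal M * ENNReal.ofReal (m ^ (-(p - 1)⁻¹)) ^ (p - 1) := by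
        rw [apProduct]
        gcongr
        · exact setAvgE_le_of_forall_le hQm hQ0 hQt fun x hx => (h x hx).2
        · exact setAvgE_le_of_forall_le hQm hQ0 hQt hdual
    _ = ENNReal.ofReal (M / m) := by
        rw [ENNReal.ofReal_rpow_of_nonneg (by positivity) hp1.le, hpow,
          ← ENNReal.ofReal_mul' (by positivity), div_eq_mul_inv]

end Averages

section Cubes

variable {n : ℕ}

lemma cubeE_eq_preimage_pi (a : Fin n → ℝ) (h : ℝ) :
    CubeE n a h = WithLp.ofLp ⁻¹' univ.pi fun i => Icc (a i) (a i + h) := by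
  ext x
  simp only [CubeE, mem_ofPred_eq, mem_preimage, mem_univ_pi, mem_Icc]

lemma measurableSet_cubeE (a : Fin n → ℝ) (h : ℝ) : MeasurableSet (CubeE n a h) := by
  rw [cubeE_eq_preimage_pi]
  exact (MeasurableSet.univ_pi fun _ => measurableSet_Icc).preimage
    (PiLp.volume_preserving_ofLp (Fin n)).measurable

lemma volume_cubeE (a : Fin n → ℝ) {h : ℝ} (hh : 0 ≤ h) :
    volume (CubeE n a h) = ENNReal.ofReal (h ^ n) := by
  rw [cubeE_eq_preimage_pi, (PiLp.volume_preserving_ofLp (Fin n)).measure_preimage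
    (MeasurableSet.univ_pi fun _ => measurableSet_Icc).nullMeasurableSet, volume_pi_pi]
  simp [Real.volume_Icc, ENNReal.ofReal_pow hh]

lemma norm_sub_toLp_le_of_mem_cubeE {a : Fin n → ℝ} {h : ℝ} (hh : 0 ≤ h)
    {x : EuclideanSpace ℝ (Fin n)} (hx : x ∈ CubeE n a h) : ‖x - WithLp.toLp 2 a‖ ≤ √n * h := by
  rw [EuclideanSpace.norm_eq, ← Real.sqrt_sq hh, ← Real.sqrt_mul n.cast_nonneg]
  refine Real.sqrt_le_sqrt ?_
  calc ∑ i, ‖(x - WithLp.toLp 2 a) i‖ ^ 2 ≤ ∑ _i : Fin n, h ^ 2 := by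
        refine Finset.sum_le_sum fun i _ => ?_
        rw [PiLp.sub_apply, PiLp.toLp_apply, Real.norm_eq_abs, sq_abs]
        have := hx i
        exact pow_le_pow_left₀ (by linarith) (by linarith) 2
    _ = n * h ^ 2 := by simp

lemma ball_subset_cubeE (r : ℝ) : ball 0 r ⊆ CubeE n (fun _ => -r) (2 * r) := by
  intro x hx i
  have := (PiLp.norm_apply_le x i).trans_lt (mem_ball_zero_iff.mp hx)
  rw [Real.norm_eq_abs, abs_lt] at this
  constructor <;> linarith

end Cubes

def unitBallVolume (n : ℕ) : ℝ := volume.real (ball (0 : EuclideanSpace ℝ (Fin n)) 1)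

lemma unitBallVolume_pos (n : ℕ) : 0 < unitBallVolume n :=
  ENNReal.toReal_pos (measure_ball_pos volume _ one_pos).ne' measure_ball_lt_top.ne

lemma rpow_add_natCast_div {n : ℕ} {R : ℝ} (hR : 0 < R) (s θ : ℝ) :
    R ^ (s + n) / (θ * R ^ n) = R ^ s / θ := by
  rw [Real.rpow_add hR, Real.rpow_natCast]
  field_simp

-- `θ` is the ratio `|Q| / ρⁿ` between a set `Q` and the ball of radius `ρ` it is compared with.
def apPowerConst (n : ℕ) (p θ : ℝ) : ℝ :=
  unitBallVolume n / θ * (n * unitBallVolume n / θ) ^ (p - 1)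

lemma apPowerConst_pos (n : ℕ) [NeZero n] (p : ℝ) {θ : ℝ} (hθ : 0 < θ) :
    0 < apPowerConst n p θ := by
  have := unitBallVolume_pos n
  have := NeZero.pos n
  unfold apPowerConst
  positivity

lemma apProduct_norm_rpow {n : ℕ} {p : ℝ} (hp : p ≠ 1) (δ : ℝ)
    (Q : Set (EuclideanSpace ℝ (Fin n))) :
    apProduct n p (fun x => ‖x‖ ^ (((n : ℝ) - δ) * (p - 1))) Q =
      setAvgE n Q (fun x => ‖x‖ ^ (((n : ℝ) - δ) * (p - 1))) *
        setAvgE n Q (fun x => ‖x‖ ^ (δ - n)) ^ (p - 1) := by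
  have hp1 : p - 1 ≠ 0 := sub_ne_zero.mpr hp
  rw [apProduct]
  congr 3
  funext x
  rw [← Real.rpow_mul (norm_nonneg x)]
  field_simp
  rw [neg_sub]

/-- The radius `ρ` of the comparison ball cancels: this is the scale invariance of `A_p`. -/
lemma radial_avg_mul_rpow_eq {n p δ ρ θ κ : ℝ} (hδ : 0 < δ) (hρ : 0 < ρ) (hθ : 0 < θ)
    (hκ : 0 ≤ κ) (hn : 0 ≤ n) :
    n / ((n - δ) * (p - 1) + n) * (ρ ^ ((n - δ) * (p - 1)) / θ) * κ *
        (n / (δ - n + n) * (ρ ^ (δ - n) / θ) * κ) ^ (p - 1) =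
      n / ((n - δ) * (p - 1) + n) * (κ / θ) * (n * κ / θ) ^ (p - 1) * δ ^ (1 - p) := by
  have hsplit : n / (δ - n + n) * (ρ ^ (δ - n) / θ) * κ = n * κ / θ * δ⁻¹ * ρ ^ (δ - n) := by
    rw [sub_add_cancel]
    ring
  have hcancel : ρ ^ ((n - δ) * (p - 1)) * ρ ^ ((δ - n) * (p - 1)) = 1 := by
    rw [← Real.rpow_add hρ, ← add_mul, add_comm, sub_add_sub_cancel, sub_self, zero_mul,
      Real.rpow_zero]
  rw [hsplit, Real.mul_rpow (by positivity) (by positivity),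
    Real.mul_rpow (by positivity) (by positivity), Real.inv_rpow hδ.le, ← Real.rpow_neg hδ.le,
    neg_sub, ← Real.rpow_mul hρ.le]
  linear_combination (n / ((n - δ) * (p - 1) + n) * (κ / θ) * (n * κ / θ) ^ (p - 1) *
    δ ^ (1 - p)) * hcancel

section PowerWeight

variable {n : ℕ} [NeZero n] {Q : Set (EuclideanSpace ℝ (Fin n))} {p δ : ℝ}

lemma setAvgE_norm_rpow_le_of_subset_ball {s R θ : ℝ} (hs : -(n : ℝ) < s) (hR : 0 < R)
    (hθ : 0 < θ) (hQ : Q ⊆ ball 0 R) (hvol : ENNReal.ofReal (θ * R ^ n) ≤ volume Q) :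
    setAvgE n Q (fun x => ‖x‖ ^ s) ≤
      ENNReal.ofReal (n / (s + n) * (R ^ s / θ) * unitBallVolume n) := by
  have hball := setLIntegral_ball_norm_rpow (volume : Measure (EuclideanSpace ℝ (Fin n)))
    (s := s) (by rwa [finrank_euclideanSpace_fin]) hR.le
  rw [finrank_euclideanSpace_fin] at hball
  convert setAvgE_le_ofReal_div (by positivity) hvol ((lintegral_mono_set hQ).trans_eq hball)
    using 2
  rw [← rpow_add_natCast_div hR, unitBallVolume]
  ring

lemma ofReal_le_setAvgE_norm_rpow_of_ball_subset {s r Θ : ℝ} (hs : -(n : ℝ) < s) (hr : 0 < r)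
    (hΘ : 0 < Θ) (hQ : ball 0 r ⊆ Q) (hvol : volume Q ≤ ENNReal.ofReal (Θ * r ^ n)) :
    ENNReal.ofReal (n / (s + n) * (r ^ s / Θ) * unitBallVolume n) ≤
      setAvgE n Q (fun x => ‖x‖ ^ s) := by
  have hball := setLIntegral_ball_norm_rpow (volume : Measure (EuclideanSpace ℝ (Fin n)))
    (s := s) (by rwa [finrank_euclideanSpace_fin]) hr.le
  rw [finrank_euclideanSpace_fin] at hball
  convert ofReal_div_le_setAvgE (by positivity) hvol (hball.symm.trans_le (lintegral_mono_set hQ))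
    using 2
  rw [← rpow_add_natCast_div hr, unitBallVolume]
  ring

lemma apProduct_norm_rpow_le_of_subset_ball {R θ : ℝ} (hp : 1 < p) (hδ : 0 < δ)
    (hδn : δ ≤ n) (hR : 0 < R) (hθ : 0 < θ) (hQ : Q ⊆ ball 0 R)
    (hvol : ENNReal.ofReal (θ * R ^ n) ≤ volume Q) :
    apProduct n p (fun x => ‖x‖ ^ (((n : ℝ) - δ) * (p - 1))) Q ≤
      ENNReal.ofReal (apPowerConst n p θ * δ ^ (1 - p)) := by
  have hβ : 0 ≤ ((n : ℝ) - δ) * (p - 1) := mul_nonneg (by linarith) (by linarith)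
  have hn : (0 : ℝ) < n := by have := NeZero.pos n; positivity
  have hκ := (unitBallVolume_pos n).le
  rw [apProduct_norm_rpow hp.ne']
  calc _ ≤ ENNReal.ofReal (n / ((n - δ) * (p - 1) + n) * (R ^ ((n - δ) * (p - 1)) / θ) *
          unitBallVolume n) *
        ENNReal.ofReal (n / (δ - n + n) * (R ^ (δ - n) / θ) * unitBallVolume n) ^ (p - 1) := by
        gcongr
        · exact setAvgE_norm_rpow_le_of_subset_ball (by linarith) hR hθ hQ hvol
        · exact setAvgE_norm_rpow_le_of_subset_ball (by linarith) hR hθ hQ hvol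
    _ = ENNReal.ofReal (n / ((n - δ) * (p - 1) + n) * (unitBallVolume n / θ) *
          (n * unitBallVolume n / θ) ^ (p - 1) * δ ^ (1 - p)) := by
        rw [ENNReal.ofReal_rpow_of_nonneg (by rw [sub_add_cancel]; positivity) (by linarith),
          ← ENNReal.ofReal_mul (by positivity), radial_avg_mul_rpow_eq hδ hR hθ hκ hn.le]
    _ ≤ _ := by
        rw [apPowerConst, mul_assoc _ (unitBallVolume n / θ), mul_assoc, mul_assoc]
        refine ENNReal.ofReal_le_ofReal (mul_le_of_le_one_left (by positivity) ?_)
        exact div_le_one_of_le₀ (by linarith) (by positivity)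

lemma ofReal_le_apProduct_norm_rpow_of_ball_subset {r Θ : ℝ} (hp : 1 < p) (hδ : 0 < δ)
    (hδn : δ ≤ n) (hr : 0 < r) (hΘ : 0 < Θ) (hQ : ball 0 r ⊆ Q)
    (hvol : volume Q ≤ ENNReal.ofReal (Θ * r ^ n)) :
    ENNReal.ofReal (p⁻¹ * apPowerConst n p Θ * δ ^ (1 - p)) ≤
      apProduct n p (fun x => ‖x‖ ^ (((n : ℝ) - δ) * (p - 1))) Q := by
  have hβ : 0 ≤ ((n : ℝ) - δ) * (p - 1) := mul_nonneg (by linarith) (by linarith)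
  have hn : (0 : ℝ) < n := by have := NeZero.pos n; positivity
  have hκ := (unitBallVolume_pos n).le
  rw [apProduct_norm_rpow hp.ne']
  calc _ ≤ ENNReal.ofReal (n / ((n - δ) * (p - 1) + n) * (unitBallVolume n / Θ) *
          (n * unitBallVolume n / Θ) ^ (p - 1) * δ ^ (1 - p)) := by
        have hfactor : p⁻¹ ≤ n / ((n - δ) * (p - 1) + n) := by
          rw [le_div_iff₀ (by positivity), inv_mul_le_iff₀ (by linarith)]
          nlinarith
        refine ENNReal.ofReal_le_ofReal ?_
        rw [apPowerConst]
        linear_combination (unitBallVolume n / Θ * (n * unitBallVolume n / Θ) ^ (p - 1) *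
          δ ^ (1 - p)) * hfactor
    _ = ENNReal.ofReal (n / ((n - δ) * (p - 1) + n) * (r ^ ((n - δ) * (p - 1)) / Θ) *
          unitBallVolume n) *
        ENNReal.ofReal (n / (δ - n + n) * (r ^ (δ - n) / Θ) * unitBallVolume n) ^ (p - 1) := by
        rw [ENNReal.ofReal_rpow_of_nonneg (by rw [sub_add_cancel]; positivity) (by linarith),
          ← ENNReal.ofReal_mul (by positivity), radial_avg_mul_rpow_eq hδ hr hΘ hκ hn.le]
    _ ≤ _ := by
        gcongr
        · exact ofReal_le_setAvgE_norm_rpow_of_ball_subset (by linarith) hr hΘ hQ hvol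
        · exact ofReal_le_setAvgE_norm_rpow_of_ball_subset (by linarith) hr hΘ hQ hvol

/-- A cube of side `h` whose corner lies within `2√n h` of the origin sits in a ball of
comparable volume; otherwise `‖x‖` varies on it by a factor of at most `3`. -/
lemma apProduct_norm_rpow_cubeE_le (hp : 1 < p) (hδ : 0 < δ) (hδn : δ ≤ n)
    (a : Fin n → ℝ) {h : ℝ} (hh : 0 < h) :
    apProduct n p (fun x => ‖x‖ ^ (((n : ℝ) - δ) * (p - 1))) (CubeE n a h) ≤
      ENNReal.ofReal (max (apPowerConst n p ((4 * √n) ^ n)⁻¹ * δ ^ (1 - p))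
        (3 ^ ((n : ℝ) * (p - 1)))) := by
  set c : EuclideanSpace ℝ (Fin n) := WithLp.toLp 2 a
  have hsn : 0 < √(n : ℝ) := Real.sqrt_pos.mpr (by have := NeZero.pos n; positivity)
  have hclose : ∀ x ∈ CubeE n a h, |‖x‖ - ‖c‖| ≤ √n * h := fun x hx =>
    (abs_norm_sub_norm_le x c).trans (norm_sub_toLp_le_of_mem_cubeE hh.le hx)
  rcases le_or_gt ‖c‖ (2 * √n * h) with hnear | hfar
  · refine (apProduct_norm_rpow_le_of_subset_ball hp hδ hδn (R := 4 * √n * h)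
      (by positivity) (by positivity) (fun x hx => ?_) ?_).trans
      (ENNReal.ofReal_le_ofReal (le_max_left _ _))
    · have := (abs_le.mp (hclose x hx)).2
      rw [mem_ball_zero_iff]
      nlinarith
    · rw [volume_cubeE a hh.le, mul_pow (4 * √n) h, inv_mul_cancel_left₀ (by positivity)]
  · have hc : 0 < ‖c‖ := lt_of_le_of_lt (by positivity) hfar
    have hβ : 0 ≤ ((n : ℝ) - δ) * (p - 1) := mul_nonneg (by linarith) (by linarith)
    refine (apProduct_le_of_forall_mem hp (m := (‖c‖ / 2) ^ (((n : ℝ) - δ) * (p - 1)))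
      (M := (3 / 2 * ‖c‖) ^ (((n : ℝ) - δ) * (p - 1))) (by positivity)
      (measurableSet_cubeE a h) ?_ ?_ fun x hx => ?_).trans ?_
    · rw [volume_cubeE a hh.le]
      exact (ENNReal.ofReal_pos.mpr (by positivity)).ne'
    · rw [volume_cubeE a hh.le]
      exact ENNReal.ofReal_ne_top
    · have := abs_le.mp (hclose x hx)
      constructor <;> refine Real.rpow_le_rpow (by positivity) ?_ hβ <;> linarith
    · rw [← Real.div_rpow (by positivity) (by positivity),
        show 3 / 2 * ‖c‖ / (‖c‖ / 2) = 3 by field_simp]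
      refine ENNReal.ofReal_le_ofReal ((Real.rpow_le_rpow_of_exponent_le (by norm_num) ?_).trans
        (le_max_right _ _))
      nlinarith

lemma apConstE_norm_rpow_le (hp : 1 < p) (hδ : 0 < δ) (hδn : δ ≤ n) :
    ApConstE n p (fun x => ‖x‖ ^ (((n : ℝ) - δ) * (p - 1))) ≤
      ENNReal.ofReal (max (apPowerConst n p ((4 * √n) ^ n)⁻¹ * δ ^ (1 - p))
        (3 ^ ((n : ℝ) * (p - 1)))) :=
  (apConstE_eq_iSup_apProduct n p _).trans_le <|
    iSup_le fun a => iSup₂_le fun _ hh => apProduct_norm_rpow_cubeE_le hp hδ hδn a hh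

lemma ofReal_le_apConstE_norm_rpow (hp : 1 < p) (hδ : 0 < δ) (hδn : δ ≤ n) :
    ENNReal.ofReal (p⁻¹ * apPowerConst n p (2 ^ n) * δ ^ (1 - p)) ≤
      ApConstE n p (fun x => ‖x‖ ^ (((n : ℝ) - δ) * (p - 1))) := by
  rw [apConstE_eq_iSup_apProduct]
  refine le_iSup_of_le (fun _ => -(1 / 2)) (le_iSup₂_of_le (2 * (1 / 2)) (by norm_num) ?_)
  refine ofReal_le_apProduct_norm_rpow_of_ball_subset hp hδ hδn (by norm_num) (by positivity)
    (ball_subset_cubeE _) ?_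
  rw [volume_cubeE _ (by norm_num), mul_pow]

end PowerWeight

/-- For `n ≥ 1` and `1 < p < ∞` there are constants `0 < c < C`, depending
only on `n` and `p`, such that for every `0 < δ < 1` the power weight
`w(x) = |x|^{(n-δ)(p-1)}` satisfies `c δ^{1-p} ≤ [w]_{A_p} ≤ C δ^{1-p}`; in particular
`w ∈ A_p`. -/
theorem power_weight_Ap_constant (n : ℕ) (hn : 1 ≤ n) (p : ℝ) (hp : 1 < p) :
    ∃ c C : ℝ, 0 < c ∧ c < C ∧
      ∀ δ : ℝ, 0 < δ → δ < 1 →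
        ENNReal.ofReal (c * δ ^ (1 - p)) ≤
          ApConstE n p (fun x => ‖x‖ ^ (((n : ℝ) - δ) * (p - 1))) ∧
        ApConstE n p (fun x => ‖x‖ ^ (((n : ℝ) - δ) * (p - 1))) ≤
          ENNReal.ofReal (C * δ ^ (1 - p)) ∧
        ApConstE n p (fun x => ‖x‖ ^ (((n : ℝ) - δ) * (p - 1))) < ⊤ := by
  have : NeZero n := ⟨by omega⟩
  set c := p⁻¹ * apPowerConst n p (2 ^ n)
  set Cnear := apPowerConst n p ((4 * √n) ^ n)⁻¹
  set Cfar : ℝ := 3 ^ ((n : ℝ) * (p - 1))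
  have hc : 0 < c := mul_pos (by positivity) (apPowerConst_pos n p (by positivity))
  have hCnear : 0 < Cnear := apPowerConst_pos n p (by positivity)
  have hCfar : 0 < Cfar := by positivity
  refine ⟨c, c + Cnear + Cfar, hc, by linarith, fun δ hδ hδ1 => ?_⟩
  have hδn : δ ≤ n := hδ1.le.trans (by exact_mod_cast hn)
  have hδp : 1 ≤ δ ^ (1 - p) :=
    Real.one_le_rpow_of_pos_of_le_one_of_nonpos hδ hδ1.le (by linarith)
  have hmax : max (Cnear * δ ^ (1 - p)) Cfar ≤ (c + Cnear + Cfar) * δ ^ (1 - p) :=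
    max_le (by nlinarith) (by nlinarith)
  have hupper := (apConstE_norm_rpow_le hp hδ hδn).trans (ENNReal.ofReal_le_ofReal hmax)
  exact ⟨ofReal_le_apConstE_norm_rpow hp hδ hδn, hupper, hupper.trans_lt ENNReal.ofReal_lt_top⟩
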